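/- arXiv:2103.14068 — 2 statements merged into one kernel-verified Lean document; each statement's English description precedes it below -/
import Mathlib

section
/- For one-dimensional Gaussian output perturbation M(D) = f(D) + N(0, σ²) with Δ₂f ≤ 1 and σ = 1/μ, the mechanism satisfies μ-Gaussian differential privacy: the trade-off function between M(D) and M(D') for any neighboring D, D' is at least the trade-off function between N(0,1) and N(μ,1). -/
/-!
The affine map `x ↦ σ x + f D` pushes `N(0,1)` and `N(ν,1)`, with `ν = μ (f D' - f D)`, forward to
`M D` and `M D'`, and post-processing can only raise a trade-off function. As `|ν| ≤ μ`, and a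
reflection turns `ν` into `-ν`, it remains to compare `N(0,1)` vs `N(μ,1)` with `N(0,1)` vs
`N(ν,1)` for `0 ≤ ν ≤ μ`. The likelihood ratio `exp (ν x - ν² / 2)` of `N(ν,1)` to `N(0,1)` is
increasing, so by Neyman–Pearson no test of level `α` is more powerful against `N(ν,1)` than the
upper-tail test of level `α`, whose power only grows with the mean.
-/

open MeasureTheory ProbabilityTheory

/-- The trade-off function `T(P,Q)(α)`: the infimum of type II errors of tests
with type I error at most `α` for testing `P` against `Q`. -/
noncomputable def tradeOff {Ω : Type*} [MeasurableSpace Ω]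
    (P Q : Measure Ω) (α : ℝ) : ℝ :=
  sInf {β | ∃ φ : Ω → ℝ, Measurable φ ∧ (∀ x, 0 ≤ φ x ∧ φ x ≤ 1) ∧
    (∫ x, φ x ∂P) ≤ α ∧ β = 1 - ∫ x, φ x ∂Q}

open Real Set Filter Topology
open scoped NNReal ENNReal

section Tests

lemma indicator_one_nonneg_and_le_one {Ω : Type*} (s : Set Ω) (x : Ω) :
    0 ≤ s.indicator (1 : Ω → ℝ) x ∧ s.indicator (1 : Ω → ℝ) x ≤ 1 :=
  ⟨indicator_nonneg (fun _ _ => zero_le_one) x,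
    indicator_apply_le' (fun _ => le_rfl) (fun _ => zero_le_one)⟩

variable {Ω Ω' : Type*} [MeasurableSpace Ω] [MeasurableSpace Ω'] {P Q : Measure Ω} {α : ℝ}

lemma integrable_of_nonneg_of_le_one [IsFiniteMeasure Q] {φ : Ω → ℝ} (hφm : Measurable φ)
    (hφ : ∀ x, 0 ≤ φ x ∧ φ x ≤ 1) : Integrable φ Q :=
  .of_bound hφm.aestronglyMeasurable 1 <| ae_of_all _ fun x => by
    rw [Real.norm_eq_abs, abs_le]
    constructor <;> linarith [hφ x]

lemma integral_le_measureReal_univ_of_le_one [IsFiniteMeasure Q] {φ : Ω → ℝ}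
    (hφ : ∀ x, 0 ≤ φ x ∧ φ x ≤ 1) : ∫ x, φ x ∂Q ≤ Q.real univ := by
  simpa using integral_mono_of_nonneg (ae_of_all _ fun x => (hφ x).1)
    (integrable_const (μ := Q) 1) (ae_of_all _ fun x => (hφ x).2)

lemma tradeOff_le [IsFiniteMeasure Q] {φ : Ω → ℝ} (hφm : Measurable φ)
    (hφ : ∀ x, 0 ≤ φ x ∧ φ x ≤ 1) (hlev : ∫ x, φ x ∂P ≤ α) :
    tradeOff P Q α ≤ 1 - ∫ x, φ x ∂Q := by
  refine csInf_le ⟨1 - Q.real univ, ?_⟩ ⟨φ, hφm, hφ, hlev, rfl⟩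
  rintro _ ⟨ψ, -, hψ, -, rfl⟩
  linarith [integral_le_measureReal_univ_of_le_one (Q := Q) hψ]

lemma le_tradeOff {b : ℝ} (hα : 0 ≤ α)
    (h : ∀ ψ : Ω → ℝ, Measurable ψ → (∀ x, 0 ≤ ψ x ∧ ψ x ≤ 1) → ∫ x, ψ x ∂P ≤ α →
      b ≤ 1 - ∫ x, ψ x ∂Q) :
    b ≤ tradeOff P Q α := by
  refine le_csInf ⟨_, 0, measurable_const, fun _ => ⟨le_rfl, zero_le_one⟩, by simpa using hα, rfl⟩ ?_
  rintro _ ⟨ψ, hψm, hψ, hlev, rfl⟩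
  exact h ψ hψm hψ hlev

lemma tradeOff_le_tradeOff_map [IsFiniteMeasure Q] {g : Ω → Ω'} (hg : Measurable g)
    (hα : 0 ≤ α) : tradeOff P Q α ≤ tradeOff (P.map g) (Q.map g) α := by
  refine le_tradeOff hα fun ψ hψm hψ hlev => ?_
  rw [integral_map hg.aemeasurable hψm.aestronglyMeasurable] at hlev ⊢
  exact tradeOff_le (hψm.comp hg) (fun x => hψ (g x)) hlev

end Tests

lemma Monotone.sub_mul_indicator_Ioi_sub_nonneg {r : ℝ → ℝ≥0} (hr : Monotone r) {ψ : ℝ → ℝ}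
    (hψ : ∀ x, 0 ≤ ψ x ∧ ψ x ≤ 1) (t x : ℝ) :
    0 ≤ ((r x : ℝ) - r t) * ((Ioi t).indicator 1 x - ψ x) := by
  by_cases hx : t < x
  · have : (r t : ℝ) ≤ r x := hr hx.le
    refine mul_nonneg (by linarith) ?_
    rw [indicator_of_mem (show x ∈ Ioi t from hx), Pi.one_apply]
    linarith [hψ x]
  · have : (r x : ℝ) ≤ r t := hr (not_lt.1 hx)
    refine mul_nonneg_of_nonpos_of_nonpos (by linarith) ?_
    rw [indicator_of_notMem (show x ∉ Ioi t from hx)]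
    linarith [hψ x]

/-- The Neyman–Pearson lemma for a monotone likelihood ratio `r = dQ/dP`. -/
lemma integral_le_measureReal_Ioi_of_monotone_density {P Q : Measure ℝ} [IsFiniteMeasure P]
    [IsFiniteMeasure Q] {r : ℝ → ℝ≥0} (hr : Monotone r) (hQ : Q = P.withDensity fun x => r x)
    {ψ : ℝ → ℝ} (hψm : Measurable ψ) (hψ : ∀ x, 0 ≤ ψ x ∧ ψ x ≤ 1) {t : ℝ}
    (hlev : ∫ x, ψ x ∂P ≤ P.real (Ioi t)) :
    ∫ x, ψ x ∂Q ≤ Q.real (Ioi t) := by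
  set χ : ℝ → ℝ := (Ioi t).indicator 1
  have hχm : Measurable χ := measurable_const.indicator measurableSet_Ioi
  have hχ := indicator_one_nonneg_and_le_one (Ioi t)
  have hdens : ∀ {φ : ℝ → ℝ}, Measurable φ → (∀ x, 0 ≤ φ x ∧ φ x ≤ 1) →
      ∫ x, φ x ∂Q = ∫ x, (r x : ℝ) * φ x ∂P ∧ Integrable (fun x => (r x : ℝ) * φ x) P := by
    intro φ hφm hφ
    subst hQ
    exact ⟨integral_withDensity_eq_integral_smul hr.measurable φ,
      (integrable_withDensity_iff_integrable_smul hr.measurable).1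
        (integrable_of_nonneg_of_le_one hφm hφ)⟩
  obtain ⟨hψQ, hψi⟩ := hdens hψm hψ
  obtain ⟨hχQ, hχi⟩ := hdens hχm hχ
  -- `0 ≤ ∫ (r - r t) (χ - ψ) dP` = (power gap under `Q`) - `r t` * (level gap under `P`)
  have hsplit : ∫ x, ((r x : ℝ) - r t) * (χ x - ψ x) ∂P
      = (∫ x, (r x : ℝ) * χ x ∂P - ∫ x, (r x : ℝ) * ψ x ∂P)
        - r t * (∫ x, χ x ∂P - ∫ x, ψ x ∂P) := by
    have hχP := integrable_of_nonneg_of_le_one (Q := P) hχm hχ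
    have hψP := integrable_of_nonneg_of_le_one (Q := P) hψm hψ
    have hfun : (fun x => ((r x : ℝ) - r t) * (χ x - ψ x))
        = fun x => ((r x : ℝ) * χ x - (r x : ℝ) * ψ x) - r t * (χ x - ψ x) := by
      ext x; ring
    rw [hfun, integral_sub ?_ ?_, integral_sub hχi hψi, integral_const_mul, integral_sub hχP hψP]
    exacts [hχi.sub hψi, (hχP.sub hψP).const_mul _]
  have hgap : 0 ≤ ∫ x, ((r x : ℝ) - r t) * (χ x - ψ x) ∂P :=
    integral_nonneg (hr.sub_mul_indicator_Ioi_sub_nonneg hψ t)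
  have hPt : ∫ x, χ x ∂P = P.real (Ioi t) := integral_indicator_one measurableSet_Ioi
  have hQt : ∫ x, χ x ∂Q = Q.real (Ioi t) := integral_indicator_one measurableSet_Ioi
  rw [hsplit, ← hχQ, ← hψQ, hQt, hPt] at hgap
  linarith [mul_nonneg (r t).coe_nonneg (sub_nonneg.2 hlev)]

section Cdf

variable (P : Measure ℝ) [IsProbabilityMeasure P]

lemma continuous_cdf_of_nullSingletonClass [NullSingletonClass P] : Continuous (cdf P) := by
  refine continuous_iff_continuousAt.2 fun x => ?_
  rw [(cdf P).mono.continuousAt_iff_leftLim_eq_rightLim, (cdf P).rightLim_eq]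
  have h := (cdf P).measure_singleton x
  rw [measure_cdf, measure_singleton, eq_comm, ENNReal.ofReal_eq_zero] at h
  exact le_antisymm ((cdf P).mono.leftLim_le le_rfl) (sub_nonpos.1 h)

lemma measureReal_Ioi_eq_one_sub_cdf (t : ℝ) : P.real (Ioi t) = 1 - cdf P t := by
  rw [← compl_Iic, probReal_compl_eq_one_sub measurableSet_Iic, cdf_eq_real]

lemma tendsto_measureReal_Ioi_atTop : Tendsto (fun t => P.real (Ioi t)) atTop (𝓝 0) := by
  simpa [measureReal_Ioi_eq_one_sub_cdf] using (tendsto_cdf_atTop P).const_sub 1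

lemma exists_measureReal_Ioi_eq [NullSingletonClass P] {α : ℝ} (hα : α ∈ Ioo 0 1) :
    ∃ t, P.real (Ioi t) = α := by
  obtain ⟨a, ha⟩ := ((tendsto_cdf_atBot P).eventually_lt_const (sub_pos.2 hα.2)).exists
  obtain ⟨b, hb⟩ := ((tendsto_cdf_atTop P).eventually_const_lt (sub_lt_self 1 hα.1)).exists
  obtain ⟨t, ht⟩ :=
    intermediate_value_univ a b (continuous_cdf_of_nullSingletonClass P) ⟨ha.le, hb.le⟩
  exact ⟨t, by rw [measureReal_Ioi_eq_one_sub_cdf, ht, sub_sub_cancel]⟩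

end Cdf

lemma gaussianPDFReal_eq_mul_exp (m₀ m₁ : ℝ) {v : ℝ≥0} (hv : v ≠ 0) (x : ℝ) :
    gaussianPDFReal m₁ v x
      = gaussianPDFReal m₀ v x * exp (((m₁ - m₀) * x - (m₁ ^ 2 - m₀ ^ 2) / 2) / v) := by
  have hv' : (v : ℝ) ≠ 0 := NNReal.coe_ne_zero.2 hv
  simp only [gaussianPDFReal]
  rw [mul_assoc _ (rexp _), ← exp_add]
  congr 2
  field_simp
  ring

lemma gaussianReal_eq_withDensity_exp (m₀ m₁ : ℝ) {v : ℝ≥0} (hv : v ≠ 0) :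
    gaussianReal m₁ v = (gaussianReal m₀ v).withDensity
      fun x => ((exp (((m₁ - m₀) * x - (m₁ ^ 2 - m₀ ^ 2) / 2) / v)).toNNReal : ℝ≥0∞) := by
  rw [gaussianReal_of_var_ne_zero _ hv, gaussianReal_of_var_ne_zero _ hv,
    ← withDensity_mul _ (measurable_gaussianPDF _ _) (by fun_prop)]
  congr 1 with x
  rw [Pi.mul_apply, gaussianPDF, gaussianPDF, gaussianPDFReal_eq_mul_exp m₀ m₁ hv,
    ENNReal.ofReal_mul (gaussianPDFReal_nonneg _ _ _)]
  rfl

lemma gaussianReal_map_mul_add (m : ℝ) (v : ℝ≥0) (a b : ℝ) :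
    (gaussianReal m v).map (fun x => a * x + b)
      = gaussianReal (a * m + b) (.mk (a ^ 2) (sq_nonneg a) * v) := by
  rw [← gaussianReal_map_add_const, ← gaussianReal_map_const_mul,
    Measure.map_map (measurable_add_const b) (measurable_const_mul a)]
  rfl

lemma monotone_gaussianReal_Ioi (v : ℝ≥0) (t : ℝ) :
    Monotone fun m => gaussianReal m v (Ioi t) := by
  intro m m' hm
  dsimp only
  rw [← zero_add m, ← zero_add m', ← gaussianReal_map_add_const, ← gaussianReal_map_add_const,
    Measure.map_apply (measurable_add_const _) measurableSet_Ioi,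
    Measure.map_apply (measurable_add_const _) measurableSet_Ioi]
  refine measure_mono fun x hx => ?_
  simp only [mem_preimage, mem_Ioi] at hx ⊢
  linarith

lemma tradeOff_gaussianReal_le_of_nonneg {ν μ α : ℝ} (hν : 0 ≤ ν) (hνμ : ν ≤ μ)
    (hα : α ∈ Icc (0 : ℝ) 1) :
    tradeOff (gaussianReal 0 1) (gaussianReal μ 1) α
      ≤ tradeOff (gaussianReal 0 1) (gaussianReal ν 1) α := by
  have := nullSingletonClass_gaussianReal (μ := 0) one_ne_zero
  refine le_tradeOff hα.1 fun ψ hψm hψ hlev => ?_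
  have hr : Monotone fun x : ℝ => (exp (((ν - 0) * x - (ν ^ 2 - 0 ^ 2) / 2) / (1 : ℝ≥0))).toNNReal :=
    fun x y hxy => by
      dsimp only
      gcongr
  have hNP : ∀ t, α ≤ (gaussianReal 0 1).real (Ioi t) →
      ∫ x, ψ x ∂gaussianReal ν 1 ≤ (gaussianReal ν 1).real (Ioi t) := fun t ht =>
    integral_le_measureReal_Ioi_of_monotone_density hr
      (gaussianReal_eq_withDensity_exp 0 ν one_ne_zero) hψm hψ (hlev.trans ht)
  rcases hα.1.eq_or_lt with rfl | hα0
  -- no upper tail has level `0`; let the threshold go to `∞` instead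
  · have hψν : ∫ x, ψ x ∂gaussianReal ν 1 ≤ 0 :=
      ge_of_tendsto' (tendsto_measureReal_Ioi_atTop _) fun t => hNP t measureReal_nonneg
    calc tradeOff _ _ 0 ≤ 1 - ∫ _, (0 : ℝ) ∂gaussianReal μ 1 :=
          tradeOff_le measurable_const (fun _ => ⟨le_rfl, zero_le_one⟩) (by simp)
      _ ≤ 1 - ∫ x, ψ x ∂gaussianReal ν 1 := by simpa using hψν
  rcases hα.2.eq_or_lt with rfl | hα1
  · calc tradeOff _ _ 1 ≤ 1 - ∫ _, (1 : ℝ) ∂gaussianReal μ 1 :=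
          tradeOff_le measurable_const (fun _ => ⟨zero_le_one, le_rfl⟩) (by simp)
      _ ≤ 1 - ∫ x, ψ x ∂gaussianReal ν 1 := by
          simpa using integral_le_measureReal_univ_of_le_one (Q := gaussianReal ν 1) hψ
  obtain ⟨t, ht⟩ := exists_measureReal_Ioi_eq (gaussianReal 0 1) ⟨hα0, hα1⟩
  calc tradeOff _ _ α ≤ 1 - (gaussianReal μ 1).real (Ioi t) := by
        rw [← integral_indicator_one measurableSet_Ioi]
        refine tradeOff_le (measurable_const.indicator measurableSet_Ioi)
          (indicator_one_nonneg_and_le_one _) ?_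
        rw [integral_indicator_one measurableSet_Ioi, ht]
    _ ≤ 1 - (gaussianReal ν 1).real (Ioi t) :=
        sub_le_sub_left (ENNReal.toReal_mono (measure_ne_top _ _)
          (monotone_gaussianReal_Ioi 1 t hνμ)) 1
    _ ≤ 1 - ∫ x, ψ x ∂gaussianReal ν 1 := sub_le_sub_left (hNP t ht.ge) 1

lemma tradeOff_gaussianReal_le {ν μ α : ℝ} (hν : |ν| ≤ μ) (hα : α ∈ Icc (0 : ℝ) 1) :
    tradeOff (gaussianReal 0 1) (gaussianReal μ 1) α
      ≤ tradeOff (gaussianReal 0 1) (gaussianReal ν 1) α := by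
  rcases le_total 0 ν with h | h
  · exact tradeOff_gaussianReal_le_of_nonneg h ((le_abs_self ν).trans hν) hα
  calc tradeOff (gaussianReal 0 1) (gaussianReal μ 1) α
      ≤ tradeOff (gaussianReal 0 1) (gaussianReal (-ν) 1) α :=
        tradeOff_gaussianReal_le_of_nonneg (neg_nonneg.2 h) ((neg_le_abs ν).trans hν) hα
    _ ≤ tradeOff ((gaussianReal 0 1).map (fun x => -x)) ((gaussianReal (-ν) 1).map (fun x => -x))
          α := tradeOff_le_tradeOff_map measurable_neg hα.1
    _ = tradeOff (gaussianReal 0 1) (gaussianReal ν 1) α := by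
        rw [gaussianReal_map_neg, gaussianReal_map_neg, neg_zero, neg_neg]

/-- One-dimensional Gaussian output perturbation `M(D) = f(D) + N(0, 1/μ²)` of a
statistic with sensitivity at most `1` satisfies `μ`-Gaussian differential
privacy. -/
theorem gaussian_mechanism_gdp
    {D : Type*} (Neighbor : D → D → Prop)
    (f : D → ℝ) (μ : ℝ) (hμ : 0 < μ)
    (hsens : ∀ d d', Neighbor d d' → |f d - f d'| ≤ 1)
    (σ : ℝ) (hσ : σ = 1 / μ)
    (M : D → Measure ℝ)
    (hMdef : ∀ d, M d = gaussianReal (f d) ((σ ^ 2).toNNReal)) :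
    ∀ d d', Neighbor d d' → ∀ α : ℝ, α ∈ Set.Icc (0:ℝ) 1 →
      tradeOff (gaussianReal 0 1) (gaussianReal μ 1) α ≤ tradeOff (M d) (M d') α := by
  intro d d' hnb α hα
  set ν := μ * (f d' - f d)
  have hν : |ν| ≤ μ := by
    rw [abs_mul, abs_of_pos hμ, abs_sub_comm]
    exact mul_le_of_le_one_right hμ.le (hsens d d' hnb)
  have hσν : σ * ν + f d = f d' := by
    rw [hσ]
    field_simp
    ring
  have hmap : ∀ m, (gaussianReal m 1).map (fun x => σ * x + f d)
      = gaussianReal (σ * m + f d) ((σ ^ 2).toNNReal) := by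
    intro m
    rw [gaussianReal_map_mul_add, mul_one]
    congr
    exact (max_eq_left (sq_nonneg σ)).symm
  calc tradeOff (gaussianReal 0 1) (gaussianReal μ 1) α
      ≤ tradeOff (gaussianReal 0 1) (gaussianReal ν 1) α := tradeOff_gaussianReal_le hν hα
    _ ≤ tradeOff ((gaussianReal 0 1).map (fun x => σ * x + f d))
          ((gaussianReal ν 1).map (fun x => σ * x + f d)) α :=
        tradeOff_le_tradeOff_map (by fun_prop) hα.1
    _ = tradeOff (M d) (M d') α := by rw [hmap, hmap, hMdef, hMdef, mul_zero, zero_add, hσν]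
end

section
/- The exponential mechanism with utility function u of sensitivity Δu, which outputs candidate r with probability proportional to exp(ε·u(D,r)/(2Δu)), is (ε, 0)-differentially private. -/
/-!
If every utility changes by at most `Δu` between neighbouring databases, each unnormalised weight
`exp (ε u / (2 Δu))` changes by a factor of at most `exp (ε / 2)`, and hence so does the normalising
sum. The two factors combine to `exp ε` for each output probability, and summing over `S` gives
the bound for every event.
-/

open Finset

noncomputable def softmax {R : Type*} [Fintype R] (f : R → ℝ) (r : R) : ℝ :=
  Real.exp (f r) / ∑ r' : R, Real.exp (f r')

lemma sum_exp_le_exp_mul_sum_exp {R : Type*} [Fintype R] {f g : R → ℝ} {c : ℝ}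
    (h : ∀ r, f r ≤ g r + c) : ∑ r, Real.exp (f r) ≤ Real.exp c * ∑ r, Real.exp (g r) := by
  rw [mul_sum]
  refine sum_le_sum fun r _ => ?_
  rw [← Real.exp_add, add_comm]
  exact Real.exp_le_exp.2 (h r)

lemma softmax_le_exp_mul_softmax {R : Type*} [Fintype R] {f g : R → ℝ} {c : ℝ}
    (h : ∀ r, |f r - g r| ≤ c) (r : R) : softmax f r ≤ Real.exp (2 * c) * softmax g r := by
  have hfg : ∀ r, f r ≤ g r + c := fun r => by linarith [(abs_le.1 (h r)).2]
  have hgf : ∀ r, g r ≤ f r + c := fun r => by linarith [(abs_le.1 (h r)).1]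
  have hpos : ∀ f : R → ℝ, 0 < ∑ r', Real.exp (f r') := fun f =>
    sum_pos (fun r' _ => Real.exp_pos _) ⟨r, mem_univ r⟩
  have hnum : Real.exp (f r) ≤ Real.exp c * Real.exp (g r) := by
    rw [← Real.exp_add, add_comm]
    exact Real.exp_le_exp.2 (hfg r)
  have hden := sum_exp_le_exp_mul_sum_exp hgf
  unfold softmax
  rw [two_mul, Real.exp_add, mul_div_assoc', div_le_div_iff₀ (hpos f) (hpos g)]
  calc Real.exp (f r) * ∑ r', Real.exp (g r')
      ≤ (Real.exp c * Real.exp (g r)) * (Real.exp c * ∑ r', Real.exp (f r')) :=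
        mul_le_mul hnum hden (hpos g).le (by positivity)
    _ = Real.exp c * Real.exp c * Real.exp (g r) * ∑ r', Real.exp (f r') := by ring

lemma abs_mul_div_sub_mul_div_le {a b Δ ε : ℝ} (hab : |a - b| ≤ Δ) (hΔ : 0 < Δ) (hε : 0 ≤ ε) :
    |ε * a / (2 * Δ) - ε * b / (2 * Δ)| ≤ ε / 2 := by
  rw [← sub_div, ← mul_sub, abs_div, abs_mul, abs_of_nonneg hε, abs_of_pos (by positivity : (0 : ℝ) < 2 * Δ),
    div_le_div_iff₀ (by positivity) two_pos]
  linarith [mul_le_mul_of_nonneg_left hab hε]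

theorem exponential_mechanism_dp_general
    {D R : Type*} [Fintype R] (Neighbor : D → D → Prop)
    (u : D → R → ℝ) (Δu ε : ℝ) (hΔ : 0 < Δu) (hε : 0 < ε)
    (hsens : ∀ r : R, ∀ d d', Neighbor d d' → |u d r - u d' r| ≤ Δu)
    (P : D → R → ℝ)
    (hPdef : ∀ d r, P d r =
      Real.exp (ε * u d r / (2 * Δu)) / ∑ r' : R, Real.exp (ε * u d r' / (2 * Δu))) :
    ∀ d d', Neighbor d d' → ∀ S : Finset R,
      ∑ r ∈ S, P d r ≤ Real.exp ε * ∑ r ∈ S, P d' r := by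
  intro d d' hnb S
  have hP : ∀ d, P d = softmax fun r => ε * u d r / (2 * Δu) := fun d => funext (hPdef d)
  have hpoint : ∀ r, P d r ≤ Real.exp ε * P d' r := by
    intro r
    have := softmax_le_exp_mul_softmax
      (fun r => abs_mul_div_sub_mul_div_le (hsens r d d' hnb) hΔ hε.le) r
    rwa [mul_div_cancel₀ ε two_ne_zero, ← hP, ← hP] at this
  rw [mul_sum]
  exact sum_le_sum fun r _ => hpoint r

/-- The exponential mechanism, which outputs candidate `r` with probability
proportional to `exp(ε u(D,r) / (2 Δu))`, is `(ε, 0)`-differentially private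
when `Δu` bounds the sensitivity of the utility function `u`. -/
theorem exponential_mechanism_dp
    {D R : Type*} [Fintype R] [Nonempty R] (Neighbor : D → D → Prop)
    (u : D → R → ℝ) (Δu ε : ℝ) (hΔ : 0 < Δu) (hε : 0 < ε)
    (hsens : ∀ r : R, ∀ d d', Neighbor d d' → |u d r - u d' r| ≤ Δu)
    (P : D → R → ℝ)
    (hPdef : ∀ d r, P d r =
      Real.exp (ε * u d r / (2 * Δu)) / ∑ r' : R, Real.exp (ε * u d r' / (2 * Δu))) :
    ∀ d d', Neighbor d d' → ∀ S : Finset R,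
      ∑ r ∈ S, P d r ≤ Real.exp ε * ∑ r ∈ S, P d' r :=
  exponential_mechanism_dp_general Neighbor u Δu ε hΔ hε hsens P hPdef
end
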